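/- arXiv:2007.01640 — 2 statements merged into one kernel-verified Lean document; each statement's English description precedes it below -/
import Mathlib

section
/- Let G be a group and let a1, a3, a5, b, c, d1, d2, f, g, h be elements of G such that: (i) a1 * b * c * a5 = a3 * d1 * d2; (ii) a5 commutes with d1, a5 commutes with d2, and c commutes with d2; (iii) f * a3 * f⁻¹ = a5; (iv) g * d1 * g⁻¹ = a3 and g * c * g⁻¹ = a5; (v) h * d2 * h⁻¹ = a3 and h * b * h⁻¹ = a5. Then a1 = (f⁻¹ * (a5 * f * a5⁻¹)) * (g⁻¹ * f⁻¹ * (a5 * f * a5⁻¹) * g) * (h⁻¹ * f⁻¹ * (a5 * f * a5⁻¹) * h); in particular, a1 lies in the subgroup of G generated by f, g, h, and a5 * f * a5⁻¹. -/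
/-- Lanier's lantern trick (Lemma 2.2), abstract group-theoretic version. -/
theorem lanier_lantern_trick {G : Type*} [Group G]
    (a1 a3 a5 b c d1 d2 f g h : G)
    (hlantern : a1 * b * c * a5 = a3 * d1 * d2)
    (h1 : Commute a5 d1) (h2 : Commute a5 d2) (h3 : Commute c d2)
    (hf : f * a3 * f⁻¹ = a5)
    (hg1 : g * d1 * g⁻¹ = a3) (hg2 : g * c * g⁻¹ = a5)
    (hh1 : h * d2 * h⁻¹ = a3) (hh2 : h * b * h⁻¹ = a5) :
    a1 = (f⁻¹ * (a5 * f * a5⁻¹)) * (g⁻¹ * f⁻¹ * (a5 * f * a5⁻¹) * g) *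
        (h⁻¹ * f⁻¹ * (a5 * f * a5⁻¹) * h) ∧
    a1 ∈ Subgroup.closure {f, g, h, a5 * f * a5⁻¹} := by
  have hfa : f⁻¹ * a5 * f = a3 := by rw [← hf]; group
  have e1 : f⁻¹ * (a5 * f * a5⁻¹) = a3 * a5⁻¹ := by
    rw [show f⁻¹ * (a5 * f * a5⁻¹) = (f⁻¹ * a5 * f) * a5⁻¹ by group, hfa]
  have hga3 : g⁻¹ * a3 * g = d1 := by rw [← hg1]; group
  have hga5 : g⁻¹ * a5 * g = c := by rw [← hg2]; group
  have e2 : g⁻¹ * f⁻¹ * (a5 * f * a5⁻¹) * g = d1 * c⁻¹ := by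
    rw [show g⁻¹ * f⁻¹ * (a5 * f * a5⁻¹) * g =
      (g⁻¹ * ((f⁻¹ * a5 * f) * a5⁻¹) * g) by group, hfa,
      show g⁻¹ * (a3 * a5⁻¹) * g = (g⁻¹ * a3 * g) * (g⁻¹ * a5 * g)⁻¹ by group,
      hga3, hga5]
  have hha3 : h⁻¹ * a3 * h = d2 := by rw [← hh1]; group
  have hha5 : h⁻¹ * a5 * h = b := by rw [← hh2]; group
  have e3 : h⁻¹ * f⁻¹ * (a5 * f * a5⁻¹) * h = d2 * b⁻¹ := by
    rw [show h⁻¹ * f⁻¹ * (a5 * f * a5⁻¹) * h =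
      (h⁻¹ * ((f⁻¹ * a5 * f) * a5⁻¹) * h) by group, hfa,
      show h⁻¹ * (a3 * a5⁻¹) * h = (h⁻¹ * a3 * h) * (h⁻¹ * a5 * h)⁻¹ by group,
      hha3, hha5]
  have key : a1 = (a3 * a5⁻¹) * (d1 * c⁻¹) * (d2 * b⁻¹) := by
    have ha1 : a1 = a3 * d1 * d2 * a5⁻¹ * c⁻¹ * b⁻¹ := by
      rw [← hlantern]; group
    rw [ha1]
    have c1 : a5⁻¹ * d1 = d1 * a5⁻¹ := (h1.inv_left).eq
    have c2 : a5⁻¹ * d2 = d2 * a5⁻¹ := (h2.inv_left).eq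
    have c3 : c⁻¹ * d2 = d2 * c⁻¹ := (h3.inv_left).eq
    calc a3 * d1 * d2 * a5⁻¹ * c⁻¹ * b⁻¹
        = a3 * d1 * (d2 * a5⁻¹) * c⁻¹ * b⁻¹ := by group
      _ = a3 * d1 * (a5⁻¹ * d2) * c⁻¹ * b⁻¹ := by rw [c2]
      _ = a3 * d1 * a5⁻¹ * (d2 * c⁻¹) * b⁻¹ := by group
      _ = a3 * d1 * a5⁻¹ * (c⁻¹ * d2) * b⁻¹ := by rw [c3]
      _ = a3 * (d1 * a5⁻¹) * c⁻¹ * d2 * b⁻¹ := by group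
      _ = a3 * (a5⁻¹ * d1) * c⁻¹ * d2 * b⁻¹ := by rw [c1]
      _ = (a3 * a5⁻¹) * (d1 * c⁻¹) * (d2 * b⁻¹) := by group
  have main : a1 = (f⁻¹ * (a5 * f * a5⁻¹)) * (g⁻¹ * f⁻¹ * (a5 * f * a5⁻¹) * g) *
      (h⁻¹ * f⁻¹ * (a5 * f * a5⁻¹) * h) := by
    rw [e1, e2, e3, key]
  refine ⟨main, ?_⟩
  rw [main]
  have mf : f ∈ Subgroup.closure {f, g, h, a5 * f * a5⁻¹} :=
    Subgroup.subset_closure (by simp)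
  have mg : g ∈ Subgroup.closure {f, g, h, a5 * f * a5⁻¹} :=
    Subgroup.subset_closure (by simp)
  have mh : h ∈ Subgroup.closure {f, g, h, a5 * f * a5⁻¹} :=
    Subgroup.subset_closure (by simp)
  have mk : a5 * f * a5⁻¹ ∈ Subgroup.closure {f, g, h, a5 * f * a5⁻¹} :=
    Subgroup.subset_closure (by simp)
  exact mul_mem (mul_mem (mul_mem (inv_mem mf) mk)
    (mul_mem (mul_mem (mul_mem (inv_mem mg) (inv_mem mf)) mk) mg))
    (mul_mem (mul_mem (mul_mem (inv_mem mh) (inv_mem mf)) mk) mh)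
end

section
/- Let G be a group, n ≥ 2 an integer, and t_1, …, t_{n−1} elements of G satisfying the braid relations: t_i t_{i+1} t_i = t_{i+1} t_i t_{i+1} for 1 ≤ i ≤ n−2, and t_i t_j = t_j t_i whenever |i − j| ≥ 2. Then (t_1² t_2 t_3 ⋯ t_{n−1})^{n−1} = (t_1 t_2 ⋯ t_{n−1})^{n}. -/
/-- If `t 1, …, t (n-1)` satisfy the braid relations, then
`(t 1 ^ 2 * t 2 * ⋯ * t (n-1)) ^ (n-1) = (t 1 * t 2 * ⋯ * t (n-1)) ^ n`.
Here `t 1 * t 2 * ⋯ * t (n-1)` is written as the product of the list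
`(List.range (n-1)).map (fun i => t (i + 1))`. -/
theorem braid_power_identity {G : Type*} [Group G] (n : ℕ) (hn : 2 ≤ n) (t : ℕ → G)
    (hbraid : ∀ i, 1 ≤ i → i ≤ n - 2 →
      t i * t (i + 1) * t i = t (i + 1) * t i * t (i + 1))
    (hcomm : ∀ i j, 1 ≤ i → i ≤ n - 1 → 1 ≤ j → j ≤ n - 1 →
      2 ≤ |(i : ℤ) - (j : ℤ)| → t i * t j = t j * t i) :
    (t 1 * ((List.range (n - 1)).map (fun i => t (i + 1))).prod) ^ (n - 1)
      = (((List.range (n - 1)).map (fun i => t (i + 1))).prod) ^ n := by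
  set N := n - 1 with hN
  have hN1 : 1 ≤ N := by omega
  have hnN : n = N + 1 := by omega
  set P : ℕ → G := fun m => ((List.range m).map (fun i => t (i + 1))).prod with hP
  have hPsucc : ∀ m, P (m + 1) = P m * t (m + 1) := by
    intro m
    simp [hP, List.range_succ]
  have hbraid' : ∀ i, 1 ≤ i → i + 1 ≤ N →
      t i * t (i + 1) * t i = t (i + 1) * t i * t (i + 1) := by
    intro i h1 h2; exact hbraid i h1 (by omega)
  have hcomm' : ∀ i j, 1 ≤ i → j ≤ N → i + 2 ≤ j → t i * t j = t j * t i := by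
    intro i j h1 h4 h5
    refine hcomm i j h1 (by omega) (by omega) (by omega) ?_
    exact le_abs.mpr (Or.inr (by omega))
  -- P m commutes with t j when j ≥ m + 2
  have hPcomm : ∀ m j, m + 2 ≤ j → j ≤ N → P m * t j = t j * P m := by
    intro m
    induction m with
    | zero => intro j _ _; simp [hP]
    | succ m ih =>
      intro j h1 h2
      rw [hPsucc, mul_assoc, hcomm' (m + 1) j (by omega) h2 (by omega),
        ← mul_assoc, ih j (by omega) h2, mul_assoc]
  -- key: P k * t i = t (i+1) * P k for i+1 ≤ k ≤ N
  have hkey : ∀ i k, 1 ≤ i → i + 1 ≤ k → k ≤ N → P k * t i = t (i + 1) * P k := by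
    intro i k hi hik
    induction k with
    | zero => omega
    | succ k ih =>
      intro hkN
      rcases Nat.lt_or_ge (i + 1) (k + 1) with h | h
      · rw [hPsucc, mul_assoc,
          ← hcomm' i (k + 1) hi hkN (by omega),
          ← mul_assoc, ih (by omega) (by omega), mul_assoc]
      · obtain ⟨j, rfl⟩ : ∃ j, i = j + 1 := ⟨i - 1, by omega⟩
        obtain rfl : k = j + 1 := by omega
        have e : P (j + 1 + 1) = P j * t (j + 1) * t (j + 1 + 1) := by
          rw [hPsucc, hPsucc]
        rw [e, mul_assoc, mul_assoc, ← mul_assoc (t (j + 1)),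
          hbraid' (j + 1) (by omega) (by omega)]
        rw [show t (j + 1 + 1) * t (j + 1) * t (j + 1 + 1)
            = t (j + 1 + 1) * (t (j + 1) * t (j + 1 + 1)) by rw [mul_assoc],
          ← mul_assoc, hPcomm j (j + 1 + 1) (by omega) (by omega)]
        simp [mul_assoc]
  -- s^m * t 1 = t (m+1) * s^m for m+1 ≤ N, where s = P N
  have hpow : ∀ m, m + 1 ≤ N → P N ^ m * t 1 = t (m + 1) * P N ^ m := by
    intro m
    induction m with
    | zero => intro _; simp
    | succ m ih =>
      intro h
      rw [pow_succ', mul_assoc, ih (by omega), ← mul_assoc,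
        hkey (m + 1) N (by omega) (by omega) le_rfl, mul_assoc]
  -- (t 1 * s)^m = P m * s^m for 1 ≤ m ≤ N
  have hfin : ∀ m, 1 ≤ m → m ≤ N → (t 1 * P N) ^ m = P m * P N ^ m := by
    intro m
    induction m with
    | zero => omega
    | succ m ih =>
      intro _ h2
      rcases Nat.eq_zero_or_pos m with rfl | hm
      · simp [hP, List.range_succ]
      · rw [pow_succ, ih hm (by omega), mul_assoc, ← mul_assoc (P N ^ m),
          hpow m (by omega), hPsucc, mul_assoc, mul_assoc, ← pow_succ]
  show (t 1 * P N) ^ N = P N ^ n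
  rw [hfin N hN1 le_rfl, hnN, pow_succ']
end
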